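/- Let D ⊊ ℝⁿ be a bounded domain with diameter d. Then ζ_D(x,y) ≤ 2·j'_D(x,y) for all x, y ∈ D, where ζ_D(x,y) = log(1 + d·|x−y| / min(η(x), η(y))) and j'_D(x,y) = (1/2)·log((1 + |x−y|/δ(x))·(1 + |x−y|/δ(y))). -/

import Mathlib

noncomputable def deltaD {n : ℕ} (D : Set (EuclideanSpace ℝ (Fin n)))
    (z : EuclideanSpace ℝ (Fin n)) : ℝ :=
  Metric.infDist z (frontier D)

noncomputable def etaD {n : ℕ} (D : Set (EuclideanSpace ℝ (Fin n)))
    (z : EuclideanSpace ℝ (Fin n)) : ℝ :=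
  deltaD D z * (Metric.diam D - deltaD D z)

noncomputable def zetaD {n : ℕ} (D : Set (EuclideanSpace ℝ (Fin n)))
    (x y : EuclideanSpace ℝ (Fin n)) : ℝ :=
  Real.log (1 + Metric.diam D * dist x y / min (etaD D x) (etaD D y))

noncomputable def zetaD' {n : ℕ} (D : Set (EuclideanSpace ℝ (Fin n)))
    (x y : EuclideanSpace ℝ (Fin n)) : ℝ :=
  (1 / 2) * Real.log ((1 + Metric.diam D * dist x y / etaD D x) *
    (1 + Metric.diam D * dist x y / etaD D y))

noncomputable def jD' {n : ℕ} (D : Set (EuclideanSpace ℝ (Fin n)))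
    (x y : EuclideanSpace ℝ (Fin n)) : ℝ :=
  (1 / 2) * Real.log ((1 + dist x y / deltaD D x) * (1 + dist x y / deltaD D y))

/-! The whole estimate is pointwise: with `a = δ(x)`, `b = δ(y)`, `t = |x - y|`, the product
`(1 + t/a)(1 + t/b)` equals `1 + t(a + b + t)/(ab)`, and it dominates `1 + d t/(a(d - a))` because
`(a + b + t)(d - a) - d b = (a + t - b)(d - a) + b(d - 2a)`, which is nonnegative since `δ` is
1-Lipschitz (`b ≤ a + t`) and the ball of radius `δ(x)` about `x` lies in `D` (`2a ≤ d`). The same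
bound holds with `x` and `y` exchanged, so it holds for `min(η(x), η(y))`. -/

open Metric Set

lemma one_add_mul_div_mul_sub_le {a b d t : ℝ} (ha : 0 < a) (hb : 0 < b) (had : 2 * a ≤ d)
    (ht : 0 ≤ t) (hba : b ≤ a + t) :
    1 + d * t / (a * (d - a)) ≤ (1 + t / a) * (1 + t / b) := by
  have hda : 0 < d - a := by linarith
  have hcore : d * b ≤ (a + b + t) * (d - a) := by
    nlinarith [mul_nonneg (sub_nonneg.2 hba) hda.le, mul_nonneg hb.le (sub_nonneg.2 had)]
  calc 1 + d * t / (a * (d - a)) ≤ 1 + t * (a + b + t) / (a * b) := by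
        gcongr 1 + ?_
        rw [div_le_div_iff₀ (by positivity) (by positivity)]
        nlinarith [mul_le_mul_of_nonneg_left hcore (mul_nonneg ht ha.le)]
    _ = (1 + t / a) * (1 + t / b) := by field_simp; ring

lemma IsPreconnected.subset_of_disjoint_frontier {X : Type*} [TopologicalSpace X] {s u : Set X}
    (hs : IsPreconnected s) (hu : IsOpen u) (hsu : (s ∩ u).Nonempty)
    (hfr : Disjoint s (frontier u)) : s ⊆ u :=
  hs.subset_of_closure_inter_subset hu hsu fun _ ⟨hzc, hzs⟩ => by
    rw [closure_eq_self_union_frontier] at hzc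
    exact hzc.resolve_right (hfr.notMem_of_mem_left hzs)

section NormedSpace

variable {E : Type*} [NormedAddCommGroup E] [NormedSpace ℝ E] {D : Set E} {x : E}

lemma ball_infDist_frontier_subset (hD : IsOpen D) (hx : x ∈ D) :
    ball x (infDist x (frontier D)) ⊆ D := by
  rcases (ball x (infDist x (frontier D))).eq_empty_or_nonempty with hempty | hne
  · exact hempty ▸ empty_subset D
  · exact (convex_ball x _).isPreconnected.subset_of_disjoint_frontier hD
      ⟨x, mem_ball_self (nonempty_ball.1 hne), hx⟩ disjoint_ball_infDist

lemma infDist_frontier_pos (hD : IsOpen D) (hproper : D ≠ univ) (hx : x ∈ D) :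
    0 < infDist x (frontier D) := by
  have hfr : (frontier D).Nonempty := nonempty_frontier_iff.2 ⟨⟨x, hx⟩, hproper⟩
  refine (isClosed_frontier.notMem_iff_infDist_pos hfr).1 fun hxfr => ?_
  rw [hD.frontier_eq] at hxfr
  exact hxfr.2 hx

lemma two_mul_infDist_frontier_le_diam (hD : IsOpen D) (hbdd : Bornology.IsBounded D)
    (hproper : D ≠ univ) (hx : x ∈ D) : 2 * infDist x (frontier D) ≤ diam D := by
  obtain ⟨y, hy⟩ := ne_univ_iff_exists_notMem D |>.1 hproper
  have : Nontrivial E := nontrivial_of_ne x y fun hxy => hy (hxy ▸ hx)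
  rw [← diam_ball_eq x infDist_nonneg]
  exact diam_mono (ball_infDist_frontier_subset hD hx) hbdd

end NormedSpace

lemma etaD_pos {n : ℕ} {D : Set (EuclideanSpace ℝ (Fin n))} (hD : IsOpen D) (hproper : D ≠ univ)
    (hbdd : Bornology.IsBounded D) {x : EuclideanSpace ℝ (Fin n)} (hx : x ∈ D) : 0 < etaD D x := by
  have hpos := infDist_frontier_pos hD hproper hx
  have hdiam := two_mul_infDist_frontier_le_diam hD hbdd hproper hx
  exact mul_pos hpos (by unfold deltaD; linarith)

lemma one_add_diam_mul_dist_div_etaD_le {n : ℕ} {D : Set (EuclideanSpace ℝ (Fin n))}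
    (hD : IsOpen D) (hproper : D ≠ univ) (hbdd : Bornology.IsBounded D)
    {x y : EuclideanSpace ℝ (Fin n)} (hx : x ∈ D) (hy : y ∈ D) :
    1 + diam D * dist x y / etaD D x ≤
      (1 + dist x y / deltaD D x) * (1 + dist x y / deltaD D y) :=
  one_add_mul_div_mul_sub_le (infDist_frontier_pos hD hproper hx)
    (infDist_frontier_pos hD hproper hy) (two_mul_infDist_frontier_le_diam hD hbdd hproper hx)
    dist_nonneg (by rw [dist_comm]; exact infDist_le_infDist_add_dist)

theorem stmt_11_general {n : ℕ} (D : Set (EuclideanSpace ℝ (Fin n)))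
    (hopen : IsOpen D) (hproper : D ≠ Set.univ)
    (hbdd : Bornology.IsBounded D)
    (x y : EuclideanSpace ℝ (Fin n)) (hx : x ∈ D) (hy : y ∈ D) :
    zetaD D x y ≤ 2 * jD' D x y := by
  have hxy := one_add_diam_mul_dist_div_etaD_le hopen hproper hbdd hx hy
  have hyx := one_add_diam_mul_dist_div_etaD_le hopen hproper hbdd hy hx
  rw [dist_comm, mul_comm (1 + _ / deltaD D y)] at hyx
  have hjD' : 2 * jD' D x y =
      Real.log ((1 + dist x y / deltaD D x) * (1 + dist x y / deltaD D y)) := by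
    rw [jD']; ring
  rw [hjD', zetaD]
  have hmin := lt_min (etaD_pos hopen hproper hbdd hx) (etaD_pos hopen hproper hbdd hy)
  apply Real.log_le_log (by positivity)
  rcases min_choice (etaD D x) (etaD D y) with h | h <;> rw [h] <;> assumption

theorem stmt_11 {n : ℕ} (hn : 2 ≤ n) (D : Set (EuclideanSpace ℝ (Fin n)))
    (hopen : IsOpen D) (hconn : IsConnected D) (hproper : D ≠ Set.univ)
    (hbdd : Bornology.IsBounded D)
    (x y : EuclideanSpace ℝ (Fin n)) (hx : x ∈ D) (hy : y ∈ D) :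
    zetaD D x y ≤ 2 * jD' D x y :=
  stmt_11_general D hopen hproper hbdd x y hx hy
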